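/- arXiv:1210.1015 — 10 statements merged into one kernel-verified Lean document; each statement's English description precedes it below -/
import Mathlib

section
/- Let n, k ≥ 2 and let G be a subgroup of the symmetric group S_n. Then G is Galois closed over k if and only if there exist a positive integer m and a function f : ({1,…,k}^n) → {1,…,m} whose invariance group {σ ∈ S_n : f(x) = f(x∘σ) for all x : {1,…,n} → {1,…,k}} is exactly G. -/
/-- `σ ⊢ f`: the permutation `σ` leaves the function `f : ({1,…,k}^Ω) → {1,…,k}` invariant. -/
def InvariantUnder {Ω : Type*} (k : ℕ) (σ : Equiv.Perm Ω) (f : (Ω → Fin k) → Fin k) : Prop :=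
  ∀ x : Ω → Fin k, f x = f (fun i => x (σ i))

/-- The Galois closure over `k` of a subgroup `G` of the symmetric group on `Ω`. -/
def galoisClosure {Ω : Type*} (k : ℕ) (G : Subgroup (Equiv.Perm Ω)) : Set (Equiv.Perm Ω) :=
  {σ | ∀ f : (Ω → Fin k) → Fin k, (∀ π ∈ G, InvariantUnder k π f) → InvariantUnder k σ f}

/-- `G` is Galois closed over `k`. -/
def IsGaloisClosed {Ω : Type*} (k : ℕ) (G : Subgroup (Equiv.Perm Ω)) : Prop :=
  galoisClosure k G = (G : Set (Equiv.Perm Ω))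

/-- The orbit equivalence: `x ~ y` iff `y = x ∘ π` for some `π ∈ G`. -/
def orbitSetoid (n k : ℕ) (G : Subgroup (Equiv.Perm (Fin n))) : Setoid (Fin n → Fin k) where
  r x y := ∃ π ∈ G, y = fun i => x (π i)
  iseqv := by
    constructor
    · intro x; exact ⟨1, one_mem G, by simp⟩
    · rintro x y ⟨π, hπ, rfl⟩
      exact ⟨π⁻¹, inv_mem hπ, by funext i; simp⟩
    · rintro x y z ⟨π, hπ, rfl⟩ ⟨ρ, hρ, rfl⟩
      exact ⟨π * ρ, mul_mem hπ hρ, by funext i; simp⟩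

/-- Characterization of the Galois closure: `σ` is in the closure iff `x ∘ σ` is in the
`G`-orbit of `x` for every `x`. -/
theorem mem_galoisClosure_iff (n k : ℕ) (hk : 2 ≤ k) (G : Subgroup (Equiv.Perm (Fin n)))
    (σ : Equiv.Perm (Fin n)) :
    σ ∈ galoisClosure k G ↔
      ∀ x : Fin n → Fin k, ∃ π ∈ G, (fun i => x (σ i)) = fun i => x (π i) := by
  constructor
  · intro hσ x
    classical
    set f : (Fin n → Fin k) → Fin k := fun y =>
      if ∃ π ∈ G, y = fun i => x (π i) then ⟨1, by omega⟩ else ⟨0, by omega⟩ with hfdef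
    have hinv : ∀ π ∈ G, InvariantUnder k π f := by
      intro π hπ y
      simp only [hfdef]
      congr 1
      apply propext
      constructor
      · rintro ⟨ρ, hρ, rfl⟩
        exact ⟨ρ * π, mul_mem hρ hπ, by funext i; simp⟩
      · rintro ⟨ρ, hρ, hy⟩
        refine ⟨ρ * π⁻¹, mul_mem hρ (inv_mem hπ), ?_⟩
        funext i
        have := congrFun hy (π⁻¹ i)
        simpa using this
    have h1 : f x = ⟨1, by omega⟩ := by
      simp only [hfdef]
      rw [if_pos ⟨1, one_mem G, by simp⟩]
    have h2 := hσ f hinv x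
    rw [h1] at h2
    by_contra hc
    simp only [hfdef, if_neg hc] at h2
    exact absurd (Fin.mk.injEq .. ▸ h2) (by simp)
  · intro h f hf x
    obtain ⟨π, hπ, heq⟩ := h x
    rw [heq]
    exact hf π hπ x

/-- A subgroup `G ≤ S_n` is Galois closed over `k` iff it is the invariance group of some
function `f : {1,…,k}^n → {1,…,m}` for some positive integer `m`. -/
theorem stmt_0 (n k : ℕ) (hn : 2 ≤ n) (hk : 2 ≤ k) (G : Subgroup (Equiv.Perm (Fin n))) :
    IsGaloisClosed k G ↔
      ∃ m : ℕ, 0 < m ∧ ∃ f : (Fin n → Fin k) → Fin m,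
        {σ : Equiv.Perm (Fin n) | ∀ x : Fin n → Fin k, f x = f (fun i => x (σ i))}
          = (G : Set (Equiv.Perm (Fin n))) := by
  classical
  constructor
  · intro hG
    letI s : Setoid (Fin n → Fin k) := orbitSetoid n k G
    haveI : Fintype (Quotient s) := @Quotient.fintype _ _ s (fun _ _ => Classical.dec _)
    haveI : Nonempty (Quotient s) := ⟨⟦fun _ => (⟨0, by omega⟩ : Fin k)⟧⟩
    let e := Fintype.equivFin (Quotient s)
    refine ⟨Fintype.card (Quotient s), Fintype.card_pos, fun x => e ⟦x⟧, ?_⟩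
    ext σ
    simp only [Set.mem_setOf_eq]
    constructor
    · intro hσ
      have : σ ∈ galoisClosure k G := by
        rw [mem_galoisClosure_iff n k hk G σ]
        intro x
        exact Quotient.exact (e.injective (hσ x))
      rwa [hG] at this
    · intro hσ x
      have : (⟦x⟧ : Quotient s) = ⟦fun i => x (σ i)⟧ :=
        Quotient.sound ⟨σ, hσ, rfl⟩
      rw [this]
  · rintro ⟨m, hm, f, hf⟩
    apply Set.Subset.antisymm
    · intro σ hσ
      replace hσ := (mem_galoisClosure_iff n k hk G σ).mp hσ
      rw [← hf]
      intro x
      obtain ⟨π, hπ, heq⟩ := hσ x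
      have hπf : ∀ y : Fin n → Fin k, f y = f (fun i => y (π i)) :=
        (Set.ext_iff.mp hf π).mpr hπ
      rw [heq]
      exact hπf x
    · intro σ hσ f' hf' x
      exact hf' σ hσ x
end

section
/- Let n, k ≥ 2 and let G be a subgroup of S_n. Then the Galois closure of G over k equals the set of all σ ∈ S_n such that for every tuple a : {1,…,n} → {1,…,k}, the tuple a∘σ lies in the G-orbit a^G = {a∘π : π ∈ G}. -/
/-- The Galois closure of `G` over `k` consists of those `σ` taking each tuple
`a : {1,…,n} → {1,…,k}` into its `G`-orbit. -/
theorem stmt_1 (n k : ℕ) (hn : 2 ≤ n) (hk : 2 ≤ k) (G : Subgroup (Equiv.Perm (Fin n))) :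
    galoisClosure k G =
      {σ : Equiv.Perm (Fin n) | ∀ a : Fin n → Fin k,
        ∃ π ∈ G, (fun i => a (σ i)) = (fun i => a (π i))} := by
  classical
  ext σ
  simp only [galoisClosure, Set.mem_setOf_eq]
  constructor
  · intro h a
    set f : (Fin n → Fin k) → Fin k := fun x =>
      if ∃ π ∈ G, x = fun i => a (π i) then ⟨1, by omega⟩ else ⟨0, by omega⟩ with hf
    have hinv : ∀ π ∈ G, InvariantUnder k π f := by
      intro π hπ x
      simp only [hf]
      congr 1
      apply propext
      constructor
      · rintro ⟨τ, hτ, hx⟩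
        refine ⟨τ * π, mul_mem hτ hπ, ?_⟩
        funext i
        exact congrFun hx (π i)
      · rintro ⟨τ, hτ, hx⟩
        refine ⟨τ * π⁻¹, mul_mem hτ (inv_mem hπ), ?_⟩
        funext i
        have := congrFun hx (π⁻¹ i)
        simpa using this
    have key := h f hinv a
    have ha : f a = ⟨1, by omega⟩ := by
      have hex : ∃ π ∈ G, a = fun i => a (π i) := ⟨1, one_mem G, by funext i; simp⟩
      simp only [hf, if_pos hex]
    rw [ha] at key
    by_contra hc
    rw [hf] at key
    simp only [if_neg hc] at key
    exact absurd (Fin.mk.injEq .. ▸ key) (by simp)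
  · intro h f hfG x
    obtain ⟨π, hπ, heq⟩ := h x
    rw [heq]
    exact hfG π hπ x
end

section
/- Let n, k ≥ 2 and let G be a subgroup of S_n. Then the Galois closure of G over k equals the intersection, over all tuples a : {1,…,n} → {1,…,k}, of the set products (S_n)_a · G = {γσ : γ ∈ (S_n)_a, σ ∈ G}, where (S_n)_a = {γ ∈ S_n : a∘γ = a} is the stabilizer of a. -/
open scoped Pointwise

/-- The Galois closure of `G` over `k` is the intersection of the set products
`(S_n)_a · G` over all tuples `a : {1,…,n} → {1,…,k}`. -/
theorem stmt_2 (n k : ℕ) (hn : 2 ≤ n) (hk : 2 ≤ k) (G : Subgroup (Equiv.Perm (Fin n))) :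
    galoisClosure k G =
      ⋂ a : Fin n → Fin k,
        ({γ : Equiv.Perm (Fin n) | ∀ i, a (γ i) = a i} * (G : Set (Equiv.Perm (Fin n)))) := by
  classical
  ext σ
  simp only [Set.mem_iInter]
  constructor
  · intro hσ a
    set f : (Fin n → Fin k) → Fin k := fun x =>
      if ∃ π ∈ G, x = fun i => a (π i) then ⟨1, by omega⟩ else ⟨0, by omega⟩ with hf
    have hinv : ∀ π ∈ G, InvariantUnder k π f := by
      intro π hπ x
      simp only [hf]
      congr 1
      apply propext
      constructor
      · rintro ⟨τ, hτ, rfl⟩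
        exact ⟨τ * π, mul_mem hτ hπ, by funext i; simp [Equiv.Perm.mul_apply]⟩
      · rintro ⟨τ, hτ, hx⟩
        refine ⟨τ * π⁻¹, mul_mem hτ (inv_mem hπ), ?_⟩
        funext i
        have := congrFun hx (π⁻¹ i)
        simpa [Equiv.Perm.mul_apply] using this
    have key := hσ f hinv a
    have ha : f a = ⟨1, by omega⟩ := by
      simp only [hf]
      rw [if_pos ⟨1, one_mem G, by funext i; simp⟩]
    rw [ha] at key
    have : ∃ π ∈ G, (fun i => a (σ i)) = fun i => a (π i) := by
      by_contra hc
      rw [hf] at key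
      simp only at key
      rw [if_neg hc] at key
      have : (1 : ℕ) = 0 := congrArg Fin.val key
      omega
    obtain ⟨π, hπ, hx⟩ := this
    refine ⟨σ * π⁻¹, ?_, π, hπ, by group⟩
    intro i
    have := congrFun hx (π⁻¹ i)
    simpa [Equiv.Perm.mul_apply] using this
  · rintro h f hf x
    obtain ⟨γ, hγ, π, hπ, rfl⟩ := h x
    have h1 : (fun i => x ((γ * π) i)) = fun i => x (π i) := by
      funext i
      simpa [Equiv.Perm.mul_apply] using hγ (π i)
    rw [h1]
    exact hf π hπ x
end

section
/- Let n, k ≥ 2. (i) If k ≥ n, then every subgroup of S_n is Galois closed over k. (ii) If k < n, then the Galois closure of the alternating group A_n over k is the full symmetric group S_n; in particular, A_n is not Galois closed over k. -/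
open scoped Classical

/-- (i) If `k ≥ n` then every subgroup of `S_n` is Galois closed over `k`;
(ii) if `k < n` then the Galois closure of `A_n` over `k` is `S_n`, so `A_n` is not
Galois closed over `k`. -/
theorem stmt_3 (n k : ℕ) (hn : 2 ≤ n) (hk : 2 ≤ k) :
    (n ≤ k → ∀ G : Subgroup (Equiv.Perm (Fin n)), IsGaloisClosed k G) ∧
    (k < n → galoisClosure k (alternatingGroup (Fin n)) = Set.univ ∧
      ¬ IsGaloisClosed k (alternatingGroup (Fin n))) := by
  set z : Fin k := ⟨0, by omega⟩ with hz
  set o : Fin k := ⟨1, by omega⟩ with ho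
  have h01k : z ≠ o := by
    intro h
    rw [hz, ho, Fin.mk.injEq] at h
    omega
  constructor
  · intro hnk G
    apply Set.Subset.antisymm
    · intro σ hσ
      by_contra hσG
      set x₀ : Fin n → Fin k := fun i => Fin.castLE hnk i with hx₀
      have hx₀inj : Function.Injective x₀ := fun a b h => Fin.castLE_injective hnk h
      set f : (Fin n → Fin k) → Fin k :=
        fun x => if ∃ ρ ∈ G, x = fun i => x₀ (ρ i) then o else z with hf
      have key : ∀ π ∈ G, ∀ x : Fin n → Fin k,
          ((∃ ρ ∈ G, x = fun i => x₀ (ρ i)) ↔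
            (∃ ρ ∈ G, (fun i => x (π i)) = fun i => x₀ (ρ i))) := by
        intro π hπ x
        constructor
        · rintro ⟨ρ, hρ, rfl⟩
          exact ⟨ρ * π, G.mul_mem hρ hπ, by funext i; simp [Equiv.Perm.mul_apply]⟩
        · rintro ⟨ρ, hρ, h⟩
          refine ⟨ρ * π⁻¹, G.mul_mem hρ (G.inv_mem hπ), ?_⟩
          funext j
          have := congrFun h (π⁻¹ j)
          simpa [Equiv.Perm.mul_apply] using this
      have hinv : ∀ π ∈ G, InvariantUnder k π f := by
        intro π hπ x
        exact if_congr (key π hπ x) rfl rfl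
      have h1 : f x₀ = o := by
        rw [hf]
        exact if_pos ⟨1, G.one_mem, by funext i; simp⟩
      have h2 := hσ f hinv x₀
      rw [h1] at h2
      by_cases hc : ∃ ρ ∈ G, (fun i => x₀ (σ i)) = fun i => x₀ (ρ i)
      · obtain ⟨ρ, hρ, h⟩ := hc
        have : σ = ρ := Equiv.ext fun j => hx₀inj (congrFun h j)
        exact hσG (this ▸ hρ)
      · rw [hf] at h2
        simp only [if_neg hc] at h2
        exact h01k h2.symm
    · intro π hπ f hf
      exact hf π hπ
  · intro hkn
    have hclosure : galoisClosure k (alternatingGroup (Fin n)) = Set.univ := by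
      ext σ
      simp only [Set.mem_univ, iff_true]
      intro f hf x
      obtain ⟨i, j, hij, hxij⟩ := Fintype.exists_ne_map_eq_of_card_lt x (by simpa using hkn)
      have hτ : ∀ t, x (Equiv.swap i j t) = x t := by
        intro t
        rcases eq_or_ne t i with rfl | hti
        · rw [Equiv.swap_apply_left]; exact hxij.symm
        rcases eq_or_ne t j with rfl | htj
        · rw [Equiv.swap_apply_right]; exact hxij
        · rw [Equiv.swap_apply_of_ne_of_ne hti htj]
      rcases Int.units_eq_one_or (Equiv.Perm.sign σ) with hs | hs
      · exact hf σ (Equiv.Perm.mem_alternatingGroup.mpr hs) x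
      · have hπ : Equiv.swap i j * σ ∈ alternatingGroup (Fin n) := by
          rw [Equiv.Perm.mem_alternatingGroup, Equiv.Perm.sign_mul,
            Equiv.Perm.sign_swap hij, hs]
          decide
        have h := hf _ hπ x
        rw [h]
        congr 1
        funext t
        exact hτ (σ t)
    refine ⟨hclosure, ?_⟩
    intro hcl
    rw [IsGaloisClosed, hclosure] at hcl
    have h01 : (⟨0, by omega⟩ : Fin n) ≠ ⟨1, by omega⟩ := by
      intro h
      rw [Fin.mk.injEq] at h
      omega
    have hmem : Equiv.swap (⟨0, by omega⟩ : Fin n) ⟨1, by omega⟩ ∈ alternatingGroup (Fin n) := by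
      rw [← SetLike.mem_coe, ← hcl]; trivial
    rw [Equiv.Perm.mem_alternatingGroup, Equiv.Perm.sign_swap h01] at hmem
    exact absurd hmem (by decide)
end

section
/- Let n ≥ 3 and k = n − 1. A subgroup G of S_n is Galois closed over k if and only if G is not the alternating group A_n. -/
/-- Collapse `j` onto `i`, then identify the complement of `j` with `Fin m`. -/
private def clps {m : ℕ} (i j : Fin (m + 1)) (d : Fin m) (a : Fin (m + 1)) : Fin m :=
  (finSuccEquiv' j (if a = j then i else a)).getD d

private lemma clps_some {m : ℕ} (i : Fin (m + 1)) {j : Fin (m + 1)} (d : Fin m)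
    {a : Fin (m + 1)} (ha : a ≠ j) : some (clps i j d a) = finSuccEquiv' j a := by
  cases h : finSuccEquiv' j a with
  | none =>
    have h2 := congrArg (finSuccEquiv' j).symm h
    simp only [Equiv.symm_apply_apply, finSuccEquiv'_symm_none] at h2
    exact absurd h2 ha
  | some b => simp [clps, if_neg ha, h]

private lemma clps_eq {m : ℕ} {i j : Fin (m + 1)} (hij : i ≠ j) (d : Fin m) :
    clps i j d i = clps i j d j := by
  simp [clps, hij]

private lemma clps_inj {m : ℕ} {i j : Fin (m + 1)} (d : Fin m) {a b : Fin (m + 1)}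
    (ha : a ≠ j) (hb : b ≠ j) (h : clps i j d a = clps i j d b) : a = b := by
  have h2 : finSuccEquiv' j a = finSuccEquiv' j b := by
    rw [← clps_some i d ha, ← clps_some i d hb, h]
  exact (finSuccEquiv' j).injective h2

private lemma clps_stab {m : ℕ} {i j : Fin (m + 1)} (hij : i ≠ j) (d : Fin m)
    (π : Equiv.Perm (Fin (m + 1))) (h : ∀ a, clps i j d (π a) = clps i j d a) :
    π = 1 ∨ π = Equiv.swap i j := by
  have key : ∀ a, a ≠ i → a ≠ j → π a = a := by
    intro a hai haj
    have hπaj : π a ≠ j := by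
      intro hj
      have h3 : clps i j d i = clps i j d a := by
        have h4 := h a
        rw [hj] at h4
        exact (clps_eq hij d).trans h4
      exact hai (clps_inj d hij haj h3).symm
    exact clps_inj d hπaj haj (h a)
  have hi : π i = i ∨ π i = j := by
    by_cases hj : π i = j
    · exact Or.inr hj
    · exact Or.inl (clps_inj d hj hij (h i))
  have hjc : π j = i ∨ π j = j := by
    by_cases hj : π j = j
    · exact Or.inr hj
    · exact Or.inl (clps_inj d hj hij ((h j).trans (clps_eq hij d).symm))
  rcases hi with hi | hi
  · left
    rcases hjc with hjc | hjc
    · exact absurd (π.injective (hjc.trans hi.symm)) hij.symm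
    · refine Equiv.ext fun a => ?_
      rcases eq_or_ne a i with rfl | hai
      · simpa using hi
      rcases eq_or_ne a j with rfl | haj
      · simpa using hjc
      · simpa using key a hai haj
  · right
    rcases hjc with hjc | hjc
    · refine Equiv.ext fun a => ?_
      rcases eq_or_ne a i with rfl | hai
      · simpa [Equiv.swap_apply_left] using hi
      rcases eq_or_ne a j with rfl | haj
      · simpa [Equiv.swap_apply_right] using hjc
      · rw [Equiv.swap_apply_of_ne_of_ne hai haj]
        exact key a hai haj
    · exact absurd (π.injective (hi.trans hjc.symm)) hij

private lemma prod_swap_pairs {α : Type*} [DecidableEq α] [Fintype α]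
    (G : Subgroup (Equiv.Perm α))
    (h2 : ∀ σ τ : Equiv.Perm α, σ.IsSwap → τ.IsSwap → σ * τ ∈ G) :
    ∀ l : List (Equiv.Perm α), (∀ g ∈ l, g.IsSwap) → Even l.length → l.prod ∈ G
  | [], _, _ => by simpa using G.one_mem
  | [a], _, he => by simp at he
  | a :: b :: t, h, he => by
    rw [List.prod_cons, List.prod_cons, ← mul_assoc]
    have het : Even t.length := by
      rcases he with ⟨c, hc⟩
      simp only [List.length_cons] at hc
      exact ⟨c - 1, by omega⟩
    exact G.mul_mem (h2 a b (h a (by simp)) (h b (by simp)))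
      (prod_swap_pairs G h2 t (fun g hg => h g (by simp [hg])) het)

private lemma alt_le_of_pairs {α : Type*} [DecidableEq α] [Fintype α]
    (G : Subgroup (Equiv.Perm α))
    (h2 : ∀ σ τ : Equiv.Perm α, σ.IsSwap → τ.IsSwap → σ * τ ∈ G) :
    alternatingGroup α ≤ G := by
  intro σ hσ
  obtain ⟨l, hl, hls⟩ := σ.truncSwapFactors.out
  rw [← hl]
  apply prod_swap_pairs G h2 l hls
  have hsign : ((-1 : ℤˣ)) ^ l.length = 1 := by
    rw [← Equiv.Perm.sign_prod_list_swap hls, hl]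
    exact Equiv.Perm.mem_alternatingGroup.mp hσ
  exact (neg_one_pow_eq_one_iff_even (by decide)).mp hsign

private lemma closure_alt_all {m : ℕ} (σ : Equiv.Perm (Fin (m + 3))) :
    σ ∈ galoisClosure (m + 2) (alternatingGroup (Fin (m + 3))) := by
  intro f hf x
  obtain ⟨i, j, hij, hx⟩ := Fintype.exists_ne_map_eq_of_card_lt x (by simp)
  have hτ : ∀ a, x (Equiv.swap i j a) = x a := by
    intro a
    rcases eq_or_ne a i with rfl | hai
    · rw [Equiv.swap_apply_left]; exact hx.symm
    rcases eq_or_ne a j with rfl | haj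
    · rw [Equiv.swap_apply_right]; exact hx
    · rw [Equiv.swap_apply_of_ne_of_ne hai haj]
  rcases Int.units_eq_one_or (Equiv.Perm.sign σ) with hs | hs
  · exact hf σ (Equiv.Perm.mem_alternatingGroup.mpr hs) x
  · have h1 : f x = f fun a => x ((Equiv.swap i j * σ) a) :=
      hf _ (Equiv.Perm.mem_alternatingGroup.mpr
        (by rw [map_mul, Equiv.Perm.sign_swap hij, hs]; simp)) x
    simpa only [Equiv.Perm.mul_apply, hτ] using h1

/-- For `k = n - 1 ≥ 2`, a subgroup of `S_n` is Galois closed over `k` iff it is not `A_n`. -/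
theorem stmt_4 (n : ℕ) (hn : 3 ≤ n) (G : Subgroup (Equiv.Perm (Fin n))) :
    IsGaloisClosed (n - 1) G ↔ G ≠ alternatingGroup (Fin n) := by
  obtain ⟨m, rfl⟩ : ∃ m, n = m + 3 := ⟨n - 3, by omega⟩
  have h31 : m + 3 - 1 = m + 2 := rfl
  rw [h31]
  have h01 : (0 : Fin (m + 3)) ≠ 1 := by
    simp [Fin.ext_iff]
  constructor
  · intro hcl hG
    have h1 : Equiv.swap (0 : Fin (m + 3)) 1 ∈ galoisClosure (m + 2) G := by
      rw [hG]; exact closure_alt_all _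
    rw [IsGaloisClosed] at hcl
    rw [hcl, hG, SetLike.mem_coe, Equiv.Perm.mem_alternatingGroup,
      Equiv.Perm.sign_swap h01] at h1
    exact absurd h1 (by decide)
  · intro hne
    rw [IsGaloisClosed]
    apply Set.Subset.antisymm
    · intro σ hσ
      by_contra hσG
      have claimA : ∀ i j : Fin (m + 3), i ≠ j → ∃ g ∈ G, σ = Equiv.swap i j * g := by
        intro i j hij
        classical
        set x : Fin (m + 3) → Fin (m + 2) := clps i j 0 with hxdef
        set f : (Fin (m + 3) → Fin (m + 2)) → Fin (m + 2) :=
          fun y => if ∃ g ∈ G, y = fun a => x (g a) then 1 else 0 with hfdef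
        have hinv : ∀ π ∈ G, InvariantUnder (m + 2) π f := by
          intro π hπ y
          simp only [hfdef]
          apply if_congr _ rfl rfl
          constructor
          · rintro ⟨g, hg, rfl⟩
            exact ⟨g * π, G.mul_mem hg hπ, by
              funext a; simp [Equiv.Perm.mul_apply]⟩
          · rintro ⟨g, hg, h⟩
            refine ⟨g * π⁻¹, G.mul_mem hg (G.inv_mem hπ), ?_⟩
            funext a
            have h2 := congrFun h (π⁻¹ a)
            simpa [Equiv.Perm.mul_apply] using h2
        have hx1 : f x = 1 := by
          simp only [hfdef]
          rw [if_pos ⟨1, G.one_mem, by funext a; simp⟩]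
        have h2 := hσ f hinv x
        rw [hx1] at h2
        by_cases hmem : ∃ g ∈ G, (fun a => x (σ a)) = fun a => x (g a)
        · obtain ⟨g, hg, h3⟩ := hmem
          have hstab : ∀ a, x ((σ * g⁻¹) a) = x a := by
            intro a
            have h4 := congrFun h3 (g⁻¹ a)
            simpa [Equiv.Perm.mul_apply] using h4
          rcases clps_stab hij 0 (σ * g⁻¹) hstab with h4 | h4
          · exact absurd (mul_inv_eq_one.mp h4 ▸ hg) hσG
          · exact ⟨g, hg, by rw [← h4, inv_mul_cancel_right]⟩
        · rw [hfdef] at h2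
          simp only [if_neg hmem] at h2
          exact absurd h2.symm (by
            simp [Fin.ext_iff])
      have hswaps : ∀ σ₁ σ₂ : Equiv.Perm (Fin (m + 3)),
          σ₁.IsSwap → σ₂.IsSwap → σ₁ * σ₂ ∈ G := by
        rintro _ _ ⟨i, j, hij, rfl⟩ ⟨k, l, hkl, rfl⟩
        obtain ⟨g1, hg1, he1⟩ := claimA i j hij
        obtain ⟨g2, hg2, he2⟩ := claimA k l hkl
        have e1 : Equiv.swap i j = σ * g1⁻¹ := by rw [he1, mul_inv_cancel_right]
        have e2 : Equiv.swap k l = σ * g2⁻¹ := by rw [he2, mul_inv_cancel_right]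
        have e3 : Equiv.swap i j * Equiv.swap k l = g1 * g2⁻¹ := by
          rw [← Equiv.swap_inv i j, e1, e2]
          group
        rw [e3]
        exact G.mul_mem hg1 (G.inv_mem hg2)
      have hAle : alternatingGroup (Fin (m + 3)) ≤ G := alt_le_of_pairs G hswaps
      rcases Int.units_eq_one_or (Equiv.Perm.sign σ) with hs | hs
      · exact hσG (hAle (Equiv.Perm.mem_alternatingGroup.mpr hs))
      · by_cases hall : ∀ h ∈ G, Equiv.Perm.sign h = 1
        · exact hne (le_antisymm
            (fun h hh => Equiv.Perm.mem_alternatingGroup.mpr (hall h hh)) hAle)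
        · push_neg at hall
          obtain ⟨h, hh, hhs⟩ := hall
          have hsh : Equiv.Perm.sign h = -1 := by
            rcases Int.units_eq_one_or (Equiv.Perm.sign h) with h1 | h1
            · exact absurd h1 hhs
            · exact h1
          have hσh : σ * h⁻¹ ∈ alternatingGroup (Fin (m + 3)) :=
            Equiv.Perm.mem_alternatingGroup.mpr (by rw [map_mul, map_inv, hs, hsh]; simp)
          have hmem : σ ∈ G := by
            have h5 := G.mul_mem (hAle hσh) hh
            rwa [inv_mul_cancel_right] at h5
          exact hσG hmem
    · intro σ hσ f hf
      exact hf σ hσ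
end

section
/- Let n ≥ 3 and let G be a subgroup of S_n. Then G is weakly representable — i.e., there exist integers k, m with 2 ≤ k < n and m ≥ 2 and a function f : ({1,…,k}^n) → {1,…,m} whose invariance group {σ ∈ S_n : f(x) = f(x∘σ) for all x} equals G — if and only if G is not the alternating group A_n. -/
/-!
If `k < n`, every colouring `x : Fin n → Fin k` is fixed by a transposition, so a function
invariant under `A_n` is invariant under all of `S_n`: `A_n` is never an invariance group.
Conversely, for `G ≠ A_n` and `k = n - 1`, let `f x` be the `G`-orbit of `x` (under
precomposition). A permutation `σ` preserving `f` sends every colouring into its own `G`-orbit;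
testing this on a colouring whose only repeated colour sits at two positions `a, b` gives
`σ ∈ G` or `(a b) σ ∈ G`. If `σ ∉ G`, then `G` contains every product of two transpositions,
hence `A_n`, but not `σ`, so `G = A_n`.
-/

open Equiv Equiv.Perm

variable {α K β : Type*}

namespace Equiv.Perm

theorem eq_one_or_eq_swap_of_forall [DecidableEq α] {a b : α} {ρ : Perm α}
    (h : ∀ i, ρ i = i ∨ ρ i = swap a b i) : ρ = 1 ∨ ρ = swap a b := by
  have hinj : ∀ i j, ρ i = ρ j → i = j := fun _ _ => ρ.injective.eq_iff.mp
  by_cases hρa : ρ a = a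
  · left
    ext i
    have := h i
    have := h b
    grind [Perm.one_apply]
  · right
    ext i
    have := h i
    have := h a
    have := h b
    grind

variable [Fintype α] [DecidableEq α] {G : Subgroup (Perm α)}

theorem alternatingGroup_le_of_swap_mul_swap_mem
    (h : ∀ a b c : α, a ≠ b → b ≠ c → swap a b * swap b c ∈ G) : alternatingGroup α ≤ G := by
  rw [← closure_three_cycles_eq_alternating, Subgroup.closure_le]
  intro θ hθ
  obtain ⟨a, ha⟩ := Finset.card_pos.mp (hθ.card_support ▸ three_pos : 0 < θ.support.card)
  have hθa : θ a ≠ a := mem_support.mp ha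
  rw [SetLike.mem_coe, hθ.eq_swap_mul_swap_iff_mem_support.mpr ha]
  exact h _ _ _ hθa.symm (θ.injective.ne hθa).symm

theorem eq_top_of_alternatingGroup_lt (h : alternatingGroup α < G) : G = ⊤ := by
  obtain ⟨τ, hτG, hτA⟩ := SetLike.exists_of_lt h
  have hτ : sign τ = -1 := (Int.units_eq_one_or _).resolve_left (mt mem_alternatingGroup.mpr hτA)
  refine eq_top_iff.mpr fun σ _ => ?_
  rcases Int.units_eq_one_or (sign σ) with hσ | hσ
  · exact h.le (mem_alternatingGroup.mpr hσ)
  · have heven : σ * τ⁻¹ ∈ alternatingGroup α := by simp [hσ, hτ]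
    simpa using mul_mem (h.le heven) hτG

theorem eq_alternatingGroup_of_swap_mul_mem {σ : Perm α} (hσ : σ ∉ G)
    (h : ∀ a b : α, a ≠ b → swap a b * σ ∈ G) : G = alternatingGroup α := by
  have hA : alternatingGroup α ≤ G :=
    alternatingGroup_le_of_swap_mul_swap_mem fun a b c hab hbc => by
      simpa [mul_assoc] using mul_mem (h a b hab) (inv_mem (h b c hbc))
  rcases hA.lt_or_eq with hlt | heq
  · exact absurd (eq_top_of_alternatingGroup_lt hlt ▸ Subgroup.mem_top σ) hσ
  · exact heq.symm

end Equiv.Perm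

theorem exists_fun_eq_iff_eq_or_eq_swap [Fintype α] [DecidableEq α] [Fintype K]
    (hK : Fintype.card α ≤ Fintype.card K + 1) {a b : α} (hab : a ≠ b) :
    ∃ x : α → K, ∀ i j, x i = x j ↔ j = i ∨ j = swap a b i := by
  have hcard : Fintype.card {i // i ≠ b} ≤ Fintype.card K := by
    rw [Fintype.card_subtype_compl, Fintype.card_subtype_eq]; omega
  obtain ⟨e⟩ := Function.Embedding.nonempty_of_card_le hcard
  refine ⟨fun i => if hi : i = b then e ⟨a, hab⟩ else e ⟨i, hi⟩, fun i j => ?_⟩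
  simp only [swap_apply_def]
  split_ifs <;> grind

def invarianceGroup (f : (α → K) → β) : Subgroup (Perm α) where
  carrier := {σ | ∀ x, f x = f (x ∘ σ)}
  one_mem' _ := rfl
  mul_mem' {σ τ} hσ hτ x := by
    rw [coe_mul, ← Function.comp_assoc, hσ x, hτ (x ∘ σ)]
  inv_mem' {σ} hσ x := by
    rw [hσ (x ∘ ⇑σ⁻¹), Function.comp_assoc, ← coe_mul, inv_mul_cancel, coe_one,
      Function.comp_id]

theorem mem_invarianceGroup {f : (α → K) → β} {σ : Perm α} :
    σ ∈ invarianceGroup f ↔ ∀ x, f x = f (x ∘ σ) :=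
  Iff.rfl

theorem invarianceGroup_comp {γ : Type*} {e : β → γ} (he : Function.Injective e)
    (f : (α → K) → β) : invarianceGroup (e ∘ f) = invarianceGroup f := by
  ext σ
  simp only [mem_invarianceGroup, Function.comp_apply, he.eq_iff]

theorem invarianceGroup_eq_top_of_alternatingGroup_le [Fintype α] [DecidableEq α] [Fintype K]
    (hK : Fintype.card K < Fintype.card α) {f : (α → K) → β}
    (hA : alternatingGroup α ≤ invarianceGroup f) : invarianceGroup f = ⊤ := by
  refine eq_top_iff.mpr fun σ _ x => ?_
  obtain ⟨i, j, hij, hx⟩ := Fintype.exists_ne_map_eq_of_card_lt x hK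
  have hswap : x ∘ swap i j = x := by
    ext l
    simp only [Function.comp_apply, swap_apply_def]
    split_ifs <;> simp_all
  rcases Int.units_eq_one_or (sign σ) with hσ | hσ
  · exact hA (mem_alternatingGroup.mpr hσ) x
  · have heven : swap i j * σ ∈ alternatingGroup α := by
      simp [hσ, sign_swap hij]
    rw [hA heven x, coe_mul, ← Function.comp_assoc, hswap]

def precompOrbit (G : Subgroup (Perm α)) (x : α → K) : Set (α → K) :=
  {y | ∃ g ∈ G, y = x ∘ g}

section PrecompOrbit

variable {G : Subgroup (Perm α)} {σ : Perm α}

theorem precompOrbit_comp_of_mem (hσ : σ ∈ G) (x : α → K) :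
    precompOrbit G (x ∘ σ) = precompOrbit G x := by
  ext y
  constructor
  · rintro ⟨g, hg, rfl⟩
    exact ⟨σ * g, mul_mem hσ hg, rfl⟩
  · rintro ⟨g, hg, rfl⟩
    refine ⟨σ⁻¹ * g, mul_mem (inv_mem hσ) hg, ?_⟩
    rw [Function.comp_assoc, ← coe_mul, mul_inv_cancel_left]

theorem le_invarianceGroup_precompOrbit : G ≤ invarianceGroup (precompOrbit (K := K) G) :=
  fun _ hσ x => (precompOrbit_comp_of_mem hσ x).symm

theorem exists_comp_eq_of_mem_invarianceGroup_precompOrbit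
    (hσ : σ ∈ invarianceGroup (precompOrbit (K := K) G)) (x : α → K) :
    ∃ g ∈ G, x ∘ σ = x ∘ g := by
  have hx : x ∘ σ ∈ precompOrbit G (x ∘ σ) := ⟨1, one_mem G, rfl⟩
  rwa [← hσ x] at hx

variable [Fintype α] [DecidableEq α] [Fintype K]

theorem mem_or_swap_mul_mem_of_mem_invarianceGroup_precompOrbit
    (hK : Fintype.card α ≤ Fintype.card K + 1)
    (hσ : σ ∈ invarianceGroup (precompOrbit (K := K) G)) {a b : α} (hab : a ≠ b) :
    σ ∈ G ∨ swap a b * σ ∈ G := by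
  obtain ⟨x, hx⟩ := exists_fun_eq_iff_eq_or_eq_swap hK hab
  obtain ⟨g, hg, hxg⟩ := exists_comp_eq_of_mem_invarianceGroup_precompOrbit hσ x
  have hfix : ∀ i, (σ * g⁻¹) i = i ∨ (σ * g⁻¹) i = swap a b i := fun i =>
    (hx i _).mp (by simpa using (congrFun hxg (g⁻¹ i)).symm)
  rcases eq_one_or_eq_swap_of_forall hfix with h | h
  · exact .inl (mul_inv_eq_one.mp h ▸ hg)
  · rw [mul_inv_eq_iff_eq_mul] at h
    exact .inr (by rwa [h, swap_mul_self_mul])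

theorem invarianceGroup_precompOrbit (hK : Fintype.card α ≤ Fintype.card K + 1)
    (hG : G ≠ alternatingGroup α) :
    invarianceGroup (precompOrbit (K := K) G) = G := by
  refine le_antisymm (fun σ hσ => ?_) le_invarianceGroup_precompOrbit
  by_contra hσG
  exact hG <| eq_alternatingGroup_of_swap_mul_mem hσG fun a b hab =>
    (mem_or_swap_mul_mem_of_mem_invarianceGroup_precompOrbit hK hσ hab).resolve_left hσG

end PrecompOrbit

/-- A subgroup `G ≤ S_n` is weakly representable (it is the invariance group of a function
`f : {1,…,k}^n → {1,…,m}` for some `2 ≤ k < n` and `m ≥ 2`) iff `G ≠ A_n`. -/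
theorem stmt_5 (n : ℕ) (hn : 3 ≤ n) (G : Subgroup (Equiv.Perm (Fin n))) :
    (∃ k m : ℕ, 2 ≤ k ∧ k < n ∧ 2 ≤ m ∧
      ∃ f : (Fin n → Fin k) → Fin m,
        {σ : Equiv.Perm (Fin n) | ∀ x : Fin n → Fin k, f x = f (fun i => x (σ i))}
          = (G : Set (Equiv.Perm (Fin n))))
      ↔ G ≠ alternatingGroup (Fin n) := by
  constructor
  · rintro ⟨k, m, -, hkn, -, f, hf⟩ rfl
    have hA : invarianceGroup f = alternatingGroup (Fin n) := SetLike.coe_injective hf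
    have htop := invarianceGroup_eq_top_of_alternatingGroup_le (by simpa using hkn) hA.ge
    have : Nontrivial (Fin n) := Fin.nontrivial_iff_two_le.mpr (by omega)
    have hindex := alternatingGroup.index_eq_two (α := Fin n)
    rw [← hA, htop, Subgroup.index_top] at hindex
    exact absurd hindex (by decide)
  · intro hG
    have : Nonempty (Fin (n - 1)) := ⟨⟨0, by omega⟩⟩
    refine ⟨n - 1, Nat.card (Set (Fin n → Fin (n - 1))), by omega, by omega, Finite.one_lt_card,
      Finite.equivFin _ ∘ precompOrbit G, ?_⟩
    exact congrArg SetLike.coe <| (invarianceGroup_comp (Finite.equivFin _).injective _).trans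
      (invarianceGroup_precompOrbit (by simp only [Fintype.card_fin]; omega) hG)
end

section
/- Let k ≥ 2, let α and β be finite sets, and let G ≤ S_α and H ≤ S_β be subgroups. Then the Galois closure over k of the direct product G × H (as a subgroup of S_{α⊕β}) equals the direct product of the Galois closure of G over k and the Galois closure of H over k. -/
/-- The direct product of `G ≤ S_α` and `H ≤ S_β`, as a subgroup of `S_{α⊕β}`. -/
def prodPermSubgroup {α β : Type*} (G : Subgroup (Equiv.Perm α)) (H : Subgroup (Equiv.Perm β)) :
    Subgroup (Equiv.Perm (α ⊕ β)) :=
  (G.prod H).map (Equiv.Perm.sumCongrHom α β)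

/-!
A permutation `σ` in the closure of `G × H` fixes every colouring fixed by `G × H`, in particular
the colouring that paints `α` and `β` in two different colours (this needs `k ≥ 2`); hence `σ`
preserves the two blocks and splits as `g ⊕ h`. Functions on `{1,…,k}^α` invariant under `G` lift
to functions on `{1,…,k}^(α⊕β)` invariant under `G × H` by ignoring the `β`-coordinates, so `g`
lies in the closure of `G`, and likewise `h` in that of `H`. Conversely, freezing the
`β`-coordinates of a `G × H`-invariant function gives a `G`-invariant function, so `g ⊕ 1` lies in
the closure of `G × H`, as does `1 ⊕ h`, and the closure is closed under products.
-/

open Equiv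

section Closure

variable {Ω : Type*} {k : ℕ} {G : Subgroup (Perm Ω)}

lemma mul_mem_galoisClosure {σ τ : Perm Ω} (hσ : σ ∈ galoisClosure k G)
    (hτ : τ ∈ galoisClosure k G) : σ * τ ∈ galoisClosure k G :=
  fun f hf x => (hσ f hf x).trans (hτ f hf fun i => x (σ i))

lemma comp_eq_of_mem_galoisClosure (hk : 2 ≤ k) {c : Ω → Fin k}
    (hc : ∀ π ∈ G, (fun i => c (π i)) = c) {σ : Perm Ω} (hσ : σ ∈ galoisClosure k G) :
    (fun i => c (σ i)) = c := by
  classical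
  obtain ⟨a, b, hab⟩ := (Fin.nontrivial_iff_two_le.2 hk).exists_pair_ne
  let f : (Ω → Fin k) → Fin k := fun x => if x = c then a else b
  have hf : ∀ π ∈ G, InvariantUnder k π f := by
    intro π hπ x
    have hiff : (fun i => x (π i)) = c ↔ x = c := by
      refine ⟨fun hx => ?_, fun hx => hx ▸ hc π hπ⟩
      calc x = fun i => (fun j => x (π j)) (π⁻¹ i) := by simp
        _ = c := by rw [hx]; exact hc π⁻¹ (inv_mem hπ)
    simp only [f, hiff]
  by_contra hne
  have hfc := hσ f hf c
  simp only [f, if_pos rfl, if_neg hne] at hfc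
  exact hab hfc

end Closure

section Sum

variable {α β : Type*} {k : ℕ} {G : Subgroup (Perm α)} {H : Subgroup (Perm β)}

lemma sumCongr_mem_prodPermSubgroup {π : Perm α} {ρ : Perm β} (hπ : π ∈ G) (hρ : ρ ∈ H) :
    sumCongr π ρ ∈ prodPermSubgroup G H :=
  ⟨(π, ρ), ⟨hπ, hρ⟩, rfl⟩

lemma sumElim_comp_sumCongr (u : α → Fin k) (v : β → Fin k) (π : Perm α) (ρ : Perm β) :
    (fun i => Sum.elim u v (sumCongr π ρ i)) = Sum.elim (fun a => u (π a)) (fun b => v (ρ b)) := by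
  funext i
  cases i <;> rfl

lemma sumCongr_one_mem_galoisClosure {g : Perm α} (hg : g ∈ galoisClosure k G) :
    sumCongr g (1 : Perm β) ∈ galoisClosure k (prodPermSubgroup G H) := by
  intro f hf x
  have hfv : ∀ π ∈ G, InvariantUnder k π fun u => f (Sum.elim u (x ∘ Sum.inr)) := by
    intro π hπ u
    simpa only [sumElim_comp_sumCongr, Perm.one_apply] using
      hf _ (sumCongr_mem_prodPermSubgroup hπ H.one_mem) (Sum.elim u (x ∘ Sum.inr))
  rw [← Sum.elim_comp_inl_inr x, sumElim_comp_sumCongr]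
  simpa only [Perm.one_apply] using hg _ hfv (x ∘ Sum.inl)

lemma one_sumCongr_mem_galoisClosure {h : Perm β} (hh : h ∈ galoisClosure k H) :
    sumCongr (1 : Perm α) h ∈ galoisClosure k (prodPermSubgroup G H) := by
  intro f hf x
  have hfu : ∀ ρ ∈ H, InvariantUnder k ρ fun v => f (Sum.elim (x ∘ Sum.inl) v) := by
    intro ρ hρ v
    simpa only [sumElim_comp_sumCongr, Perm.one_apply] using
      hf _ (sumCongr_mem_prodPermSubgroup G.one_mem hρ) (Sum.elim (x ∘ Sum.inl) v)
  rw [← Sum.elim_comp_inl_inr x, sumElim_comp_sumCongr]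
  simpa only [Perm.one_apply] using hh _ hfu (x ∘ Sum.inr)

lemma sumCongr_mem_galoisClosure {g : Perm α} {h : Perm β} (hg : g ∈ galoisClosure k G)
    (hh : h ∈ galoisClosure k H) : sumCongr g h ∈ galoisClosure k (prodPermSubgroup G H) := by
  simpa only [Perm.sumCongr_mul, mul_one, one_mul] using
    mul_mem_galoisClosure (sumCongr_one_mem_galoisClosure hg) (one_sumCongr_mem_galoisClosure hh)

lemma mem_galoisClosure_left_of_sumCongr_mem [NeZero k] {g : Perm α} {h : Perm β}
    (hgh : sumCongr g h ∈ galoisClosure k (prodPermSubgroup G H)) : g ∈ galoisClosure k G := by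
  intro f hf u
  have hF : ∀ σ ∈ prodPermSubgroup G H,
      InvariantUnder k σ fun x : α ⊕ β → Fin k => f (x ∘ Sum.inl) := by
    rintro _ ⟨⟨π, ρ⟩, ⟨hπ, -⟩, rfl⟩ x
    exact hf π hπ (x ∘ Sum.inl)
  simpa only [sumElim_comp_sumCongr, Sum.elim_comp_inl] using hgh _ hF (Sum.elim u 0)

lemma mem_galoisClosure_right_of_sumCongr_mem [NeZero k] {g : Perm α} {h : Perm β}
    (hgh : sumCongr g h ∈ galoisClosure k (prodPermSubgroup G H)) : h ∈ galoisClosure k H := by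
  intro f hf v
  have hF : ∀ σ ∈ prodPermSubgroup G H,
      InvariantUnder k σ fun x : α ⊕ β → Fin k => f (x ∘ Sum.inr) := by
    rintro _ ⟨⟨π, ρ⟩, ⟨-, hρ⟩, rfl⟩ x
    exact hf ρ hρ (x ∘ Sum.inr)
  simpa only [sumElim_comp_sumCongr, Sum.elim_comp_inr] using hgh _ hF (Sum.elim 0 v)

lemma exists_sumCongr_eq_of_mem_galoisClosure [Finite α] [Finite β] (hk : 2 ≤ k)
    {σ : Perm (α ⊕ β)} (hσ : σ ∈ galoisClosure k (prodPermSubgroup G H)) :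
    ∃ g h, sumCongr g h = σ := by
  obtain ⟨a, b, hab⟩ := (Fin.nontrivial_iff_two_le.2 hk).exists_pair_ne
  let c : α ⊕ β → Fin k := Sum.elim (fun _ => a) (fun _ => b)
  have hc : ∀ π ∈ prodPermSubgroup G H, (fun i => c (π i)) = c := by
    rintro _ ⟨⟨π, ρ⟩, -, rfl⟩
    exact sumElim_comp_sumCongr _ _ π ρ
  have hσc := comp_eq_of_mem_galoisClosure hk hc hσ
  have hmaps : Set.MapsTo σ (Set.range Sum.inl) (Set.range Sum.inl) := by
    rintro _ ⟨i, rfl⟩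
    rcases hσi : σ (Sum.inl i) with j | j
    · exact ⟨j, rfl⟩
    · have := congrFun hσc (Sum.inl i)
      simp only [hσi, c, Sum.elim_inl, Sum.elim_inr] at this
      exact absurd this.symm hab
  obtain ⟨⟨g, h⟩, hgh⟩ := Perm.mem_sumCongrHom_range_of_perm_mapsTo_inl hmaps
  exact ⟨g, h, hgh⟩

end Sum

/-- The Galois closure over `k` of the direct product `G × H ≤ S_{α⊕β}` is the direct product
of the Galois closures of `G` and of `H` over `k`. -/
theorem stmt_6 {α β : Type*} [Fintype α] [Fintype β] (k : ℕ) (hk : 2 ≤ k)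
    (G : Subgroup (Equiv.Perm α)) (H : Subgroup (Equiv.Perm β)) :
    galoisClosure k (prodPermSubgroup G H) =
      {σ : Equiv.Perm (α ⊕ β) | ∃ g ∈ galoisClosure k G, ∃ h ∈ galoisClosure k H,
        σ = Equiv.sumCongr g h} := by
  have : NeZero k := ⟨by omega⟩
  ext σ
  constructor
  · intro hσ
    obtain ⟨g, h, rfl⟩ := exists_sumCongr_eq_of_mem_galoisClosure hk hσ
    exact ⟨g, mem_galoisClosure_left_of_sumCongr_mem hσ, h,
      mem_galoisClosure_right_of_sumCongr_mem hσ, rfl⟩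
  · rintro ⟨g, hg, h, hh, rfl⟩
    exact sumCongr_mem_galoisClosure hg hh
end

section
/- Let k ≥ 2, let α and β be finite sets, and let G ≤ S_α and H ≤ S_β be subgroups. Then the direct product G × H (as a subgroup of S_{α⊕β}) is Galois closed over k if and only if both G and H are Galois closed over k. -/
lemma subset_galoisClosure {Ω : Type*} (k : ℕ) (G : Subgroup (Equiv.Perm Ω)) :
    (G : Set (Equiv.Perm Ω)) ⊆ galoisClosure k G :=
  fun σ hσ f hf => hf σ hσ

lemma mem_prodPermSubgroup_iff {α β : Type*} (G : Subgroup (Equiv.Perm α))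
    (H : Subgroup (Equiv.Perm β)) (σ : Equiv.Perm (α ⊕ β)) :
    σ ∈ prodPermSubgroup G H ↔ ∃ g ∈ G, ∃ h ∈ H, Equiv.sumCongr g h = σ := by
  constructor
  · intro hσ
    obtain ⟨⟨g, h⟩, hmem, rfl⟩ := Subgroup.mem_map.mp hσ
    exact ⟨g, hmem.1, h, hmem.2, rfl⟩
  · rintro ⟨g, hg, h, hh, rfl⟩
    exact Subgroup.mem_map.mpr ⟨(g, h), ⟨hg, hh⟩, rfl⟩

lemma closure_maps_inl {α β : Type*} [Fintype α] [Fintype β] {k : ℕ} (hk : 2 ≤ k)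
    {G : Subgroup (Equiv.Perm α)} {H : Subgroup (Equiv.Perm β)}
    {σ : Equiv.Perm (α ⊕ β)} (hσ : σ ∈ galoisClosure k (prodPermSubgroup G H)) :
    ∀ a : α, ∃ a' : α, σ (Sum.inl a) = Sum.inl a' := by
  intro a
  by_contra hcon
  push_neg at hcon
  obtain ⟨b, hb⟩ : ∃ b, σ (Sum.inl a) = Sum.inr b := by
    cases hs : σ (Sum.inl a) with
    | inl a' => exact absurd hs (hcon a')
    | inr b => exact ⟨b, rfl⟩
  set z : Fin k := ⟨0, by omega⟩ with hz
  set o : Fin k := ⟨1, by omega⟩ with ho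
  have hzo : o ≠ z := by simp [hz, ho]
  set F : ((α ⊕ β) → Fin k) → Fin k :=
    fun x => if ∀ a : α, x (Sum.inl a) = z then o else z with hF
  have hinv : ∀ π ∈ prodPermSubgroup G H, InvariantUnder k π F := by
    intro π hπ x
    obtain ⟨g, hg, h, hh, rfl⟩ := (mem_prodPermSubgroup_iff G H π).mp hπ
    simp only [hF]
    refine if_congr ?_ rfl rfl
    constructor
    · intro hx a'; simpa using hx (g a')
    · intro hx a'; simpa using hx (g.symm a')
  classical
  set x : (α ⊕ β) → Fin k := fun s => if s = Sum.inr b then o else z with hxd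
  have key := hσ F hinv x
  have h1 : F x = o := by
    simp only [hF, hxd]
    rw [if_pos]
    intro a'
    simp
  have h2 : F (fun i => x (σ i)) = z := by
    simp only [hF, hxd]
    rw [if_neg]
    intro hall
    have h3 := hall a
    rw [hb] at h3
    simp only [if_pos rfl] at h3
    exact hzo h3
  rw [h1, h2] at key
  exact hzo key

lemma perm_sum_decomp {α β : Type*} [Fintype α] [Fintype β] (σ : Equiv.Perm (α ⊕ β))
    (hd : ∀ a, ∃ a', σ (Sum.inl a) = Sum.inl a') :
    ∃ (g : Equiv.Perm α) (h : Equiv.Perm β), σ = Equiv.sumCongr g h := by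
  choose φ hφ using hd
  have hφinj : Function.Injective φ := by
    intro a a' e
    have h1 : σ (Sum.inl a) = σ (Sum.inl a') := by rw [hφ a, hφ a', e]
    exact Sum.inl_injective (σ.injective h1)
  have hφbij := Finite.injective_iff_bijective.mp hφinj
  have hψ0 : ∀ b, ∃ b', σ (Sum.inr b) = Sum.inr b' := by
    intro b
    cases hs : σ (Sum.inr b) with
    | inr b' => exact ⟨b', rfl⟩
    | inl a =>
      obtain ⟨a', ha'⟩ := hφbij.2 a
      exfalso
      have h1 : σ (Sum.inl a') = σ (Sum.inr b) := by rw [hφ a', ha', hs]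
      exact Sum.inl_ne_inr (σ.injective h1)
  choose ψ hψ using hψ0
  have hψinj : Function.Injective ψ := by
    intro b b' e
    have h1 : σ (Sum.inr b) = σ (Sum.inr b') := by rw [hψ b, hψ b', e]
    exact Sum.inr_injective (σ.injective h1)
  refine ⟨Equiv.ofBijective φ hφbij,
    Equiv.ofBijective ψ (Finite.injective_iff_bijective.mp hψinj), ?_⟩
  ext s
  cases s with
  | inl a => simp [Equiv.ofBijective, hφ a]
  | inr b => simp [Equiv.ofBijective, hψ b]

lemma closure_left {α β : Type*} [Fintype α] [Fintype β] {k : ℕ} (hk : 2 ≤ k)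
    {G : Subgroup (Equiv.Perm α)} {H : Subgroup (Equiv.Perm β)}
    {g : Equiv.Perm α} {h : Equiv.Perm β}
    (hσ : Equiv.sumCongr g h ∈ galoisClosure k (prodPermSubgroup G H)) :
    g ∈ galoisClosure k G := by
  intro f hf
  set F : ((α ⊕ β) → Fin k) → Fin k := fun x => f (fun a => x (Sum.inl a)) with hF
  have hinv : ∀ π ∈ prodPermSubgroup G H, InvariantUnder k π F := by
    intro π hπ x
    obtain ⟨g', hg', h', hh', rfl⟩ := (mem_prodPermSubgroup_iff G H π).mp hπ
    simpa [hF] using hf g' hg' (fun a => x (Sum.inl a))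
  intro u
  have key := hσ F hinv (Sum.elim u (fun _ => (⟨0, by omega⟩ : Fin k)))
  simpa [hF] using key

lemma closure_right {α β : Type*} [Fintype α] [Fintype β] {k : ℕ} (hk : 2 ≤ k)
    {G : Subgroup (Equiv.Perm α)} {H : Subgroup (Equiv.Perm β)}
    {g : Equiv.Perm α} {h : Equiv.Perm β}
    (hσ : Equiv.sumCongr g h ∈ galoisClosure k (prodPermSubgroup G H)) :
    h ∈ galoisClosure k H := by
  intro f hf
  set F : ((α ⊕ β) → Fin k) → Fin k := fun x => f (fun b => x (Sum.inr b)) with hF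
  have hinv : ∀ π ∈ prodPermSubgroup G H, InvariantUnder k π F := by
    intro π hπ x
    obtain ⟨g', hg', h', hh', rfl⟩ := (mem_prodPermSubgroup_iff G H π).mp hπ
    simpa [hF] using hf h' hh' (fun b => x (Sum.inr b))
  intro u
  have key := hσ F hinv (Sum.elim (fun _ => (⟨0, by omega⟩ : Fin k)) u)
  simpa [hF] using key

lemma sumCongr_mem_closure {α β : Type*} [Fintype α] [Fintype β] {k : ℕ}
    {G : Subgroup (Equiv.Perm α)} {H : Subgroup (Equiv.Perm β)}
    {g : Equiv.Perm α} {h : Equiv.Perm β}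
    (hg : g ∈ galoisClosure k G) (hh : h ∈ galoisClosure k H) :
    Equiv.sumCongr g h ∈ galoisClosure k (prodPermSubgroup G H) := by
  intro F hF x
  have hGstep : ∀ (u : α → Fin k) (y : β → Fin k),
      F (Sum.elim u y) = F (Sum.elim (fun a => u (g a)) y) := by
    intro u y
    refine hg (fun u' => F (Sum.elim u' y)) ?_ u
    intro π hπ u'
    have hmem : Equiv.sumCongr π 1 ∈ prodPermSubgroup G H :=
      (mem_prodPermSubgroup_iff G H _).mpr ⟨π, hπ, 1, H.one_mem, rfl⟩
    have := hF _ hmem (Sum.elim u' y)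
    convert this using 2
    funext s
    cases s <;> simp
  have hHstep : ∀ (u : α → Fin k) (y : β → Fin k),
      F (Sum.elim u y) = F (Sum.elim u (fun b => y (h b))) := by
    intro u y
    refine hh (fun y' => F (Sum.elim u y')) ?_ y
    intro π hπ y'
    have hmem : Equiv.sumCongr 1 π ∈ prodPermSubgroup G H :=
      (mem_prodPermSubgroup_iff G H _).mpr ⟨1, G.one_mem, π, hπ, rfl⟩
    have := hF _ hmem (Sum.elim u y')
    convert this using 2
    funext s
    cases s <;> simp
  have hx : x = Sum.elim (fun a => x (Sum.inl a)) (fun b => x (Sum.inr b)) := by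
    funext s; cases s <;> rfl
  have hx2 : (fun i => x (Equiv.sumCongr g h i)) =
      Sum.elim (fun a => x (Sum.inl (g a))) (fun b => x (Sum.inr (h b))) := by
    funext s; cases s <;> simp
  rw [hx2]
  conv_lhs => rw [hx]
  rw [hGstep, hHstep]

/-- The direct product `G × H ≤ S_{α⊕β}` is Galois closed over `k` iff both `G` and `H`
are Galois closed over `k`. -/
theorem stmt_7 {α β : Type*} [Fintype α] [Fintype β] (k : ℕ) (hk : 2 ≤ k)
    (G : Subgroup (Equiv.Perm α)) (H : Subgroup (Equiv.Perm β)) :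
    IsGaloisClosed k (prodPermSubgroup G H) ↔ IsGaloisClosed k G ∧ IsGaloisClosed k H := by
  constructor
  · intro hGH
    constructor
    · refine le_antisymm ?_ (subset_galoisClosure k G)
      intro g hg
      have h1 : Equiv.sumCongr g (1 : Equiv.Perm β) ∈ galoisClosure k (prodPermSubgroup G H) :=
        sumCongr_mem_closure hg (subset_galoisClosure k H H.one_mem)
      rw [hGH] at h1
      obtain ⟨g', hg', h', hh', he⟩ := (mem_prodPermSubgroup_iff G H _).mp h1
      have : g' = g := by
        ext a
        have := congrArg (fun e : Equiv.Perm (α ⊕ β) => e (Sum.inl a)) he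
        simpa using this
      rwa [← this]
    · refine le_antisymm ?_ (subset_galoisClosure k H)
      intro h hh
      have h1 : Equiv.sumCongr (1 : Equiv.Perm α) h ∈ galoisClosure k (prodPermSubgroup G H) :=
        sumCongr_mem_closure (subset_galoisClosure k G G.one_mem) hh
      rw [hGH] at h1
      obtain ⟨g', hg', h', hh', he⟩ := (mem_prodPermSubgroup_iff G H _).mp h1
      have : h' = h := by
        ext b
        have := congrArg (fun e : Equiv.Perm (α ⊕ β) => e (Sum.inr b)) he
        simpa using this
      rwa [← this]
  · rintro ⟨hG, hH⟩
    refine le_antisymm ?_ (subset_galoisClosure k _)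
    intro σ hσ
    obtain ⟨g, h, rfl⟩ := perm_sum_decomp σ (closure_maps_inl hk hσ)
    have hg : g ∈ G := by
      have h1 := closure_left hk hσ
      rw [hG] at h1
      exact h1
    have hh : h ∈ H := by
      have h1 := closure_right hk hσ
      rw [hH] at h1
      exact h1
    exact (mem_prodPermSubgroup_iff G H _).mpr ⟨g, hg, h, hh, rfl⟩
end

section
/- Let d ≥ 1, n > max(2^d, d² + d), and k = n − d. If G ≤ S_n is a subgroup whose Galois closure over k equals the full symmetric group S_n, then G = A_n or G = S_n. -/
/-!
Colour `Fin n` with `k = n - d` colours by `i ↦ i mod k`: then `d` colours are used twice and the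
others once, so the colouring is fixed by exactly `2 ^ d` permutations. The indicator function of
the `G`-orbit of this colouring is `G`-invariant, hence invariant under all of `S_n`; so `G` is
transitive on the `S_n`-orbit of the colouring, `S_n = Stab · G`, and `[S_n : G] ≤ 2 ^ d < n`.
For `n ≥ 5` a subgroup of index less than `n` has nontrivial normal core, which contains `A_n`;
for `d ≤ 1` the index is at most `2`.
-/

open Equiv Equiv.Perm
open scoped Nat

theorem exists_mem_comp_eq_comp_of_mem_galoisClosure {Ω : Type*} {k : ℕ} (hk : 1 < k)
    {G : Subgroup (Perm Ω)} {σ : Perm Ω} (hσ : σ ∈ galoisClosure k G) (x : Ω → Fin k) :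
    ∃ g ∈ G, x ∘ σ = x ∘ g := by
  classical
  let f : (Ω → Fin k) → Fin k := fun y => if ∃ g ∈ G, y = x ∘ g then ⟨0, by omega⟩ else ⟨1, hk⟩
  have hf : ∀ π ∈ G, InvariantUnder k π f := by
    intro π hπ y
    have hiff : (∃ g ∈ G, y = x ∘ g) ↔ ∃ g ∈ G, y ∘ π = x ∘ g := by
      constructor
      · rintro ⟨g, hg, rfl⟩
        exact ⟨g * π, G.mul_mem hg hπ, rfl⟩
      · rintro ⟨g, hg, hy⟩
        refine ⟨g * π⁻¹, G.mul_mem hg (G.inv_mem hπ), funext fun i => ?_⟩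
        simpa using congrFun hy (π⁻¹ i)
    simp only [f]
    exact if_congr hiff rfl rfl
  have hfx : f x = f (x ∘ σ) := hσ f hf x
  by_contra hnot
  simp [f, hnot, show ∃ g ∈ G, x = x ∘ g from ⟨1, G.one_mem, rfl⟩] at hfx

theorem index_le_card_comp_eq_self {Ω : Type*} [Finite Ω] {k : ℕ} (hk : 1 < k)
    {G : Subgroup (Perm Ω)} (hG : galoisClosure k G = Set.univ) (x : Ω → Fin k) :
    G.index ≤ Nat.card {g : Perm Ω // x ∘ g = x} := by
  have hsurj : Function.Surjective
      fun p : {g : Perm Ω // x ∘ g = x} × G => (p.1 : Perm Ω) * p.2 := by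
    intro σ
    obtain ⟨g, hg, hσg⟩ :=
      exists_mem_comp_eq_comp_of_mem_galoisClosure hk (hG ▸ Set.mem_univ σ) x
    refine ⟨(⟨σ * g⁻¹, funext fun i => ?_⟩, ⟨g, hg⟩), by simp⟩
    simpa using congrFun hσg (g⁻¹ i)
  have hcard := Nat.card_le_card_of_surjective _ hsurj
  rw [Nat.card_prod, ← G.index_mul_card] at hcard
  exact Nat.le_of_mul_le_mul_right hcard Nat.card_pos

theorem card_comp_eq_self_mul_two_pow {α ι : Type*} [Fintype α] [DecidableEq α] [Fintype ι]
    [DecidableEq ι] (f : α → ι) (hf : Function.Surjective f)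
    (hfib : ∀ i, Fintype.card {a // f a = i} ≤ 2) :
    Fintype.card {g : Perm α // f ∘ g = f} * 2 ^ Fintype.card ι = 2 ^ Fintype.card α := by
  have hfact : ∀ i, (Fintype.card {a // f a = i})! * 2 = 2 ^ Fintype.card {a // f a = i} := by
    intro i
    have hpos : 0 < Fintype.card {a // f a = i} :=
      Fintype.card_pos_iff.mpr (let ⟨a, ha⟩ := hf i; ⟨⟨a, ha⟩⟩)
    have := hfib i
    interval_cases Fintype.card {a // f a = i} <;> rfl
  rw [DomMulAct.stabilizer_card, ← Finset.card_univ, ← Finset.prod_const, ← Finset.prod_mul_distrib,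
    Finset.prod_congr rfl fun i _ => hfact i, Finset.prod_pow_eq_pow_sum,
    ← Fintype.card_sigma, Fintype.card_congr (Equiv.sigmaFiberEquiv f)]

theorem exists_surjective_card_fiber_le_two {n k : ℕ} (hk : k ≤ n) (hn : n ≤ 2 * k) :
    ∃ f : Fin n → Fin k, Function.Surjective f ∧ ∀ i, Fintype.card {a // f a = i} ≤ 2 := by
  let f : Fin n → Fin k := fun a => ⟨a % k, Nat.mod_lt _ (by have := a.isLt; omega)⟩
  refine ⟨f, fun i => ⟨⟨i, by omega⟩, Fin.ext (Nat.mod_eq_of_lt i.isLt)⟩, fun i => ?_⟩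
  have hinj : Function.Injective fun a : {a // f a = i} =>
      (⟨a.1 / k, (Nat.div_lt_iff_lt_mul (by omega)).mpr (by omega)⟩ : Fin 2) := by
    rintro ⟨a, ha⟩ ⟨b, hb⟩ hab
    simp only [f, Fin.ext_iff] at ha hb hab
    exact Subtype.ext (Fin.ext (Nat.ext_div_modEq hab (ha.trans hb.symm)))
  simpa using Fintype.card_le_of_injective _ hinj

theorem index_le_two_pow_of_galoisClosure_eq_univ {n k : ℕ} (hk : 1 < k) (hkn : k ≤ n)
    (hn : n ≤ 2 * k) {G : Subgroup (Perm (Fin n))} (hG : galoisClosure k G = Set.univ) :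
    G.index ≤ 2 ^ (n - k) := by
  obtain ⟨x, hx, hfib⟩ := exists_surjective_card_fiber_le_two hkn hn
  have hcard := card_comp_eq_self_mul_two_pow x hx hfib
  rw [Fintype.card_fin, Fintype.card_fin, ← pow_sub_mul_pow 2 hkn] at hcard
  calc G.index ≤ Nat.card {g : Perm (Fin n) // x ∘ g = x} := index_le_card_comp_eq_self hk hG x
    _ = 2 ^ (n - k) := by
      rw [Nat.card_eq_fintype_card]
      exact Nat.eq_of_mul_eq_mul_right (by positivity) hcard

theorem alternatingGroup_le_of_index_lt_card {α : Type*} [Fintype α] [DecidableEq α]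
    (h5 : 5 ≤ Nat.card α) {G : Subgroup (Perm α)} (hG : G.index < Nat.card α) :
    alternatingGroup α ≤ G := by
  refine (alternatingGroup_le_of_normal h5 ?_).trans G.normalCore_le
  rw [Subgroup.nontrivial_iff_ne_bot]
  intro hbot
  -- `Perm α ⧸ G.normalCore` embeds into the permutations of `Perm α ⧸ G`
  have hdvd : G.normalCore.index ∣ G.index ! := by
    rw [Subgroup.normalCore_eq_ker, Subgroup.index_ker, Subgroup.index_eq_card, ← Nat.card_perm]
    exact Subgroup.card_subgroup_dvd_card _
  rw [hbot, Subgroup.index_bot, Nat.card_perm] at hdvd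
  have hlt := (Nat.factorial_lt (Nat.pos_of_ne_zero Subgroup.index_ne_zero_of_finite)).mpr hG
  exact absurd (Nat.le_of_dvd (Nat.factorial_pos _) hdvd) hlt.not_ge

theorem eq_alternatingGroup_or_eq_top_of_alternatingGroup_le {α : Type*} [Fintype α]
    [DecidableEq α] [Nontrivial α] {G : Subgroup (Perm α)} (hG : alternatingGroup α ≤ G) :
    G = alternatingGroup α ∨ G = ⊤ := by
  have hdvd : G.index ∣ 2 := alternatingGroup.index_eq_two (α := α) ▸ Subgroup.index_dvd_of_le hG
  rcases (Nat.dvd_prime Nat.prime_two).mp hdvd with h | h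
  · exact Or.inr (Subgroup.index_eq_one.mp h)
  · exact Or.inl (eq_alternatingGroup_of_index_eq_two h)

theorem stmt_15_general (d n k : ℕ) (hn : max (2 ^ d) (d ^ 2 + d) < n) (hk : k = n - d)
    (G : Subgroup (Equiv.Perm (Fin n)))
    (hcl : galoisClosure k G = Set.univ) :
    G = alternatingGroup (Fin n) ∨ G = ⊤ := by
  have hd_sq : d ≤ d ^ 2 := Nat.le_self_pow two_ne_zero d
  have hd_pow : d < 2 ^ d := Nat.lt_two_pow_self
  have hpow_lt : 2 ^ d < n := (le_max_left _ _).trans_lt hn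
  have hsq_lt : d ^ 2 + d < n := (le_max_right _ _).trans_lt hn
  have hidx : G.index ≤ 2 ^ d := by
    have h := index_le_two_pow_of_galoisClosure_eq_univ (by omega) (by omega) (by omega) hcl
    rwa [show n - k = d by omega] at h
  have hA : alternatingGroup (Fin n) ≤ G := by
    rcases le_or_gt d 1 with hd | hd
    · exact alternatingGroup_le_of_index_le_two
        (hidx.trans ((Nat.pow_le_pow_right two_pos hd).trans_eq (pow_one 2)))
    · refine alternatingGroup_le_of_index_lt_card ?_ (by simpa using hidx.trans_lt hpow_lt)
      have : 4 ≤ d ^ 2 := by nlinarith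
      simp only [Nat.card_eq_fintype_card, Fintype.card_fin]
      omega
  have : Nontrivial (Fin n) := Fin.nontrivial_iff_two_le.mpr (by omega)
  exact eq_alternatingGroup_or_eq_top_of_alternatingGroup_le hA

/-- If `n > max(2^d, d² + d)`, `k = n - d`, and the Galois closure of `G ≤ S_n` over `k`
is all of `S_n`, then `G = A_n` or `G = S_n`. -/
theorem stmt_15 (d n k : ℕ) (hd : 1 ≤ d) (hn : max (2 ^ d) (d ^ 2 + d) < n) (hk : k = n - d)
    (G : Subgroup (Equiv.Perm (Fin n)))
    (hcl : galoisClosure k G = Set.univ) :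
    G = alternatingGroup (Fin n) ∨ G = ⊤ :=
  stmt_15_general d n k hn hk G hcl
end

section
/- Let n ≥ 2, k ≥ 1, and let G be a subgroup of S_n. Define the k-closure of G as the set of all σ ∈ S_n such that for every k-ary relation ρ ⊆ ({1,…,n})^k that is invariant under G (i.e., for every π ∈ G and every r = (r₁,…,r_k) ∈ ρ, the tuple (π(r₁),…,π(r_k)) lies in ρ), σ also preserves ρ (i.e., (σ(r₁),…,σ(r_k)) ∈ ρ for every r ∈ ρ). Then the Galois closure of G over k + 1 is contained in the k-closure of G. -/
/-!
If `σ` lies in the Galois closure of `G` over `m ≥ 2`, then `σ` maps every colouring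
`x : Ω → Fin m` into its `G`-orbit: the two-valued indicator of that orbit is `G`-invariant,
hence `σ`-invariant. Colour the entries of a tuple `r : Fin k → Ω` with the distinct colours
`1, …, k` and all other points with `0`; a permutation `π ∈ G` with `x ∘ σ⁻¹ = x ∘ π` must then
agree with `σ⁻¹` on the entries of `r`, so `σ ∘ r = π⁻¹ ∘ r` lies in every `G`-invariant
relation containing `r`.
-/

variable {Ω : Type*} {m : ℕ}

theorem InvariantUnder.inv {σ : Equiv.Perm Ω} {f : (Ω → Fin m) → Fin m}
    (h : InvariantUnder m σ f) : InvariantUnder m σ⁻¹ f :=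
  fun x => by simpa using (h fun i => x (σ⁻¹ i)).symm

open Classical in
theorem invariantUnder_ite_mem {σ : Equiv.Perm Ω} {S : Set (Ω → Fin m)}
    (hS : ∀ y, y ∈ S ↔ (fun i => y (σ i)) ∈ S) (a b : Fin m) :
    InvariantUnder m σ fun y => if y ∈ S then a else b :=
  fun y => if_congr (hS y) rfl rfl

def colouringOrbit (G : Subgroup (Equiv.Perm Ω)) (x : Ω → Fin m) : Set (Ω → Fin m) :=
  {y | ∃ π ∈ G, y = fun i => x (π i)}

theorem mem_colouringOrbit_iff_comp_mem {G : Subgroup (Equiv.Perm Ω)} {τ : Equiv.Perm Ω}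
    (hτ : τ ∈ G) (x y : Ω → Fin m) :
    y ∈ colouringOrbit G x ↔ (fun i => y (τ i)) ∈ colouringOrbit G x := by
  constructor
  · rintro ⟨π, hπ, rfl⟩
    exact ⟨π * τ, mul_mem hπ hτ, rfl⟩
  · rintro ⟨π, hπ, hy⟩
    refine ⟨π * τ⁻¹, mul_mem hπ (inv_mem hτ), funext fun i => ?_⟩
    simpa using congrFun hy (τ⁻¹ i)

theorem exists_comp_inv_eq_comp_of_mem_galoisClosure {G : Subgroup (Equiv.Perm Ω)}
    {σ : Equiv.Perm Ω} (hm : 2 ≤ m) (hσ : σ ∈ galoisClosure m G) (x : Ω → Fin m) :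
    ∃ π ∈ G, (fun i => x (σ⁻¹ i)) = fun i => x (π i) := by
  suffices h : (fun i => x (σ⁻¹ i)) ∈ colouringOrbit G x from h
  classical
  obtain ⟨a, b, hab⟩ := (Fin.nontrivial_iff_two_le.mpr hm).exists_pair_ne
  let f : (Ω → Fin m) → Fin m := fun y => if y ∈ colouringOrbit G x then a else b
  have hf : InvariantUnder m σ⁻¹ f :=
    (hσ f fun τ hτ => invariantUnder_ite_mem (mem_colouringOrbit_iff_comp_mem hτ x) a b).inv
  have hx : x ∈ colouringOrbit G x := ⟨1, one_mem G, rfl⟩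
  have hfx : a = f fun i => x (σ⁻¹ i) := by simpa only [f, if_pos hx] using hf x
  by_contra hnot
  exact hab (by simpa only [f, if_neg hnot] using hfx)

theorem exists_colouring_separating_tuple {k : ℕ} (r : Fin k → Ω) :
    ∃ χ : Ω → Fin (k + 1), ∀ i j, χ i = χ (r j) → i = r j := by
  classical
  refine ⟨fun i => if h : ∃ j, r j = i then h.choose.succ else 0, fun i j hij => ?_⟩
  have hj : ∃ j', r j' = r j := ⟨j, rfl⟩
  dsimp only at hij
  rw [dif_pos hj] at hij
  by_cases hi : ∃ j', r j' = i
  · rw [dif_pos hi] at hij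
    rw [← hi.choose_spec, Fin.succ_injective _ hij, hj.choose_spec]
  · rw [dif_neg hi] at hij
    exact absurd hij.symm (Fin.succ_ne_zero _)

theorem stmt_19_general (n k : ℕ) (hk : 1 ≤ k) (G : Subgroup (Equiv.Perm (Fin n))) :
    galoisClosure (k + 1) G ⊆
      {σ : Equiv.Perm (Fin n) | ∀ ρ : Set (Fin k → Fin n),
        (∀ π ∈ G, ∀ r ∈ ρ, (fun j => π (r j)) ∈ ρ) →
        ∀ r ∈ ρ, (fun j => σ (r j)) ∈ ρ} := by
  intro σ hσ ρ hρ r hr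
  obtain ⟨χ, hχ⟩ := exists_colouring_separating_tuple r
  obtain ⟨π, hπ, hχσ⟩ := exists_comp_inv_eq_comp_of_mem_galoisClosure (by omega) hσ χ
  have hσr : (fun j => σ (r j)) = fun j => π⁻¹ (r j) := funext fun j => by
    have h : χ (r j) = χ (π (σ (r j))) := by simpa using congrFun hχσ (σ (r j))
    rw [Equiv.Perm.eq_inv_iff_eq]
    exact hχ _ j h.symm
  rw [hσr]
  exact hρ π⁻¹ (inv_mem hπ) r hr

/-- The Galois closure of `G ≤ S_n` over `k + 1` is contained in the `k`-closure of `G`,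
i.e. in the group of permutations preserving every `G`-invariant `k`-ary relation on
`{1,…,n}`. -/
theorem stmt_19 (n k : ℕ) (hn : 2 ≤ n) (hk : 1 ≤ k) (G : Subgroup (Equiv.Perm (Fin n))) :
    galoisClosure (k + 1) G ⊆
      {σ : Equiv.Perm (Fin n) | ∀ ρ : Set (Fin k → Fin n),
        (∀ π ∈ G, ∀ r ∈ ρ, (fun j => π (r j)) ∈ ρ) →
        ∀ r ∈ ρ, (fun j => σ (r j)) ∈ ρ} :=
  stmt_19_general n k hk G
end
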